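/- arXiv:2407.08870 — 2 statements merged into one kernel-verified Lean document; each statement's English description precedes it below -/
import Mathlib

section
/- A graph G on n vertices satisfies α'₁(G) = ⌊(n+1)/2⌋ if and only if G contains a spanning subgraph isomorphic to P₃ ∪ ((n−3)/2)K₂ when n is odd, or to P₃ ∪ ((n−4)/2)K₂ ∪ K₁ when n is even (n ≥ 3, resp. n ≥ 4). -/
/-!
A 1-nearly edge independent set is exactly a cherry `a - v - b` (a copy of `P₃`) together with a
matching that avoids it. So a 1-nearly edge independent set with `m + 2` edges is the same thing as
a copy of `P₃ ∪ m K₂` on `2m + 3` vertices; in particular `2 |M| ≤ n + 1`, and `α'₁(G) = ⌊(n+1)/2⌋`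
exactly when `G` contains `P₃ ∪ m K₂` with `2m + 3 ∈ {n, n - 1}`, which (adding the leftover vertex
as `K₁`) is a spanning copy of `faithfulForest n`.
-/

open scoped Classical

/-- Two edges (as unordered pairs) share a vertex. -/
def ShareVertex {V : Type*} (e f : Sym2 V) : Prop := ∃ v, v ∈ e ∧ v ∈ f

/-- `M` is a 1-nearly edge independent set of `G`: a set of edges of `G` containing
exactly one pair of distinct edges sharing a common vertex. -/
def IsOneNearlyEdgeIndep {V : Type*} (G : SimpleGraph V) (M : Finset (Sym2 V)) : Prop :=
  ↑M ⊆ G.edgeSet ∧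
    (M.offDiag.filter fun p => ShareVertex p.1 p.2).card = 2

/-- The 1-nearly edge independence number `α'₁(G)`: maximum cardinality of a
1-nearly edge independent set, `0` if none exists. -/
noncomputable def edgeAlpha1 {V : Type*} (G : SimpleGraph V) : ℕ :=
  sSup {k | ∃ M : Finset (Sym2 V), IsOneNearlyEdgeIndep G M ∧ M.card = k}

/-- `I` is a 1-nearly vertex independent set of `G`: exactly one pair of distinct
vertices of `I` is adjacent in `G`. -/
def IsOneNearlyVertexIndep {V : Type*} (G : SimpleGraph V) (I : Finset V) : Prop :=
  (I.offDiag.filter fun p => G.Adj p.1 p.2).card = 2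

/-- The 1-nearly vertex independence number `α₁(G)`. -/
noncomputable def vertexAlpha1 {V : Type*} (G : SimpleGraph V) : ℕ :=
  sSup {k | ∃ I : Finset V, IsOneNearlyVertexIndep G I ∧ I.card = k}

/-- The forest `P₃ ∪ ⌊(n-3)/2⌋ K₂ (∪ K₁ if n is even)` on `Fin n`:
vertices `0,1,2` form a path `0-1-2`, and vertices `3,4`, `5,6`, ... are paired
into independent edges (with the last vertex isolated when `n` is even). -/
def faithfulForest (n : ℕ) : SimpleGraph (Fin n) where
  Adj a b := a ≠ b ∧ ((a.val ≤ 2 ∧ b.val ≤ 2 ∧ (a.val = 1 ∨ b.val = 1)) ∨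
    (3 ≤ a.val ∧ 3 ≤ b.val ∧ (a.val + 1) / 2 = (b.val + 1) / 2))
  symm := ⟨fun a b ⟨h1, h2⟩ => ⟨h1.symm, by omega⟩⟩
  loopless := ⟨fun a h => h.1 rfl⟩

open Finset SimpleGraph

section

variable {V W : Type*}

lemma ShareVertex.symm {e f : Sym2 V} (h : ShareVertex e f) : ShareVertex f e :=
  let ⟨u, hue, huf⟩ := h; ⟨u, huf, hue⟩

lemma shareVertex_self (e : Sym2 V) : ShareVertex e e :=
  ⟨e.out.1, e.out_fst_mem, e.out_fst_mem⟩

lemma shareVertex_map_iff {f : V → W} (hf : Function.Injective f) {e e' : Sym2 V} :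
    ShareVertex (e.map f) (e'.map f) ↔ ShareVertex e e' := by
  simp only [ShareVertex, Sym2.mem_map]
  constructor
  · rintro ⟨_, ⟨u, hu, rfl⟩, ⟨u', hu', huu'⟩⟩
    exact ⟨u, hu, hf huu' ▸ hu'⟩
  · rintro ⟨u, hu, hu'⟩
    exact ⟨f u, ⟨u, hu, rfl⟩, ⟨u, hu', rfl⟩⟩

lemma IsOneNearlyEdgeIndep.map {G : SimpleGraph V} {H : SimpleGraph W} (f : Copy H G)
    {M : Finset (Sym2 W)} (hM : IsOneNearlyEdgeIndep H M) :
    IsOneNearlyEdgeIndep G (M.image (Sym2.map f)) := by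
  have hf : Function.Injective f := f.injective
  have hφ : Function.Injective (Sym2.map f) := Sym2.map.injective hf
  refine ⟨?_, ?_⟩
  · intro e' he'
    obtain ⟨e, he, rfl⟩ := mem_image.1 he'
    exact f.toHom.map_mem_edgeSet (hM.1 he)
  · have : (M.image (Sym2.map f)).offDiag =
        M.offDiag.image (Prod.map (Sym2.map f) (Sym2.map f)) := by
      ext ⟨p, q⟩
      simp only [mem_offDiag, mem_image, Prod.exists, Prod.map, Prod.mk.injEq]
      constructor
      · rintro ⟨⟨e, he, rfl⟩, ⟨e', he', rfl⟩, hne⟩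
        exact ⟨e, e', ⟨he, he', fun h => hne (h ▸ rfl)⟩, rfl, rfl⟩
      · rintro ⟨e, e', ⟨he, he', hne⟩, rfl, rfl⟩
        exact ⟨⟨e, he, rfl⟩, ⟨e', he', rfl⟩, hφ.ne hne⟩
    rw [this, filter_image, card_image_of_injective _ (hφ.prodMap hφ)]
    convert hM.2 using 3 with p
    exact shareVertex_map_iff hf

lemma Finset.eq_pair_swap_of_card_eq_two {α : Type*} {s : Finset (α × α)} (hs : s.card = 2)
    (hswap : ∀ p ∈ s, p.swap ∈ s) {x : α × α} (hx : x ∈ s) (hx' : x.1 ≠ x.2) :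
    s = {x, x.swap} := by
  have hne : x ≠ x.swap := fun h => hx' (congrArg Prod.fst h)
  refine (eq_of_subset_of_card_le ?_ ?_).symm
  · exact insert_subset hx (singleton_subset_iff.2 (hswap x hx))
  · rw [hs, card_pair hne]

lemma IsOneNearlyEdgeIndep.exists_sharing_pair {G : SimpleGraph V} {M : Finset (Sym2 V)}
    (hM : IsOneNearlyEdgeIndep G M) :
    ∃ e ∈ M, ∃ f ∈ M, e ≠ f ∧ ShareVertex e f ∧ ∀ p ∈ M, ∀ q ∈ M, p ≠ q → ShareVertex p q →
      (p = e ∧ q = f) ∨ (p = f ∧ q = e) := by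
  set F := M.offDiag.filter fun p => ShareVertex p.1 p.2 with hFdef
  have hswap : ∀ p ∈ F, p.swap ∈ F := by
    simp only [hFdef, mem_filter, mem_offDiag, Prod.fst_swap, Prod.snd_swap]
    exact fun p ⟨⟨h1, h2, h12⟩, hsh⟩ => ⟨⟨h2, h1, h12.symm⟩, hsh.symm⟩
  obtain ⟨⟨e, f⟩, hef⟩ : F.Nonempty := card_pos.1 (hM.2 ▸ two_pos)
  obtain ⟨hmem, hsh⟩ := mem_filter.1 hef
  obtain ⟨he, hf, hne⟩ := mem_offDiag.1 hmem
  have hF := eq_pair_swap_of_card_eq_two hM.2 hswap hef hne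
  refine ⟨e, he, f, hf, hne, hsh, fun p hp q hq hpq hpq' => ?_⟩
  have : (p, q) ∈ F := mem_filter.2 ⟨mem_offDiag.2 ⟨hp, hq, hpq⟩, hpq'⟩
  rw [hFdef, hF] at this
  simpa using this

structure IsCherryMatching (G : SimpleGraph V) (v a b : V) (M' : Finset (Sym2 V)) : Prop where
  adj_left : G.Adj v a
  adj_right : G.Adj v b
  ne : a ≠ b
  subset_edgeSet : ↑M' ⊆ G.edgeSet
  pairwise : (M' : Set (Sym2 V)).Pairwise fun g g' => ¬ ShareVertex g g'
  notMem : ∀ g ∈ M', v ∉ g ∧ a ∉ g ∧ b ∉ g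

namespace IsCherryMatching

variable {G : SimpleGraph V} {v a b : V} {M' : Finset (Sym2 V)}

lemma not_shareVertex_left (h : IsCherryMatching G v a b M') {g : Sym2 V} (hg : g ∈ M') :
    ¬ ShareVertex s(v, a) g := by
  rintro ⟨u, hu, hug⟩
  rcases Sym2.mem_iff.1 hu with rfl | rfl
  exacts [(h.notMem g hg).1 hug, (h.notMem g hg).2.1 hug]

lemma not_shareVertex_right (h : IsCherryMatching G v a b M') {g : Sym2 V} (hg : g ∈ M') :
    ¬ ShareVertex s(v, b) g := by
  rintro ⟨u, hu, hug⟩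
  rcases Sym2.mem_iff.1 hu with rfl | rfl
  exacts [(h.notMem g hg).1 hug, (h.notMem g hg).2.2 hug]

lemma card_insert_insert (h : IsCherryMatching G v a b M') :
    (insert s(v, a) (insert s(v, b) M')).card = M'.card + 2 := by
  have hb : s(v, b) ∉ M' := fun hg => h.not_shareVertex_right hg (shareVertex_self _)
  have ha : s(v, a) ∉ insert s(v, b) M' := by
    rw [mem_insert, Sym2.congr_right, not_or]
    exact ⟨h.ne, fun hg => h.not_shareVertex_left hg (shareVertex_self _)⟩
  rw [card_insert_of_notMem ha, card_insert_of_notMem hb]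

lemma isOneNearlyEdgeIndep (h : IsCherryMatching G v a b M') :
    IsOneNearlyEdgeIndep G (insert s(v, a) (insert s(v, b) M')) := by
  refine ⟨?_, ?_⟩
  · simp only [coe_insert, Set.insert_subset_iff, mem_edgeSet]
    exact ⟨h.adj_left, h.adj_right, h.subset_edgeSet⟩
  have hab : s(v, a) ≠ s(v, b) := fun hab => h.ne (Sym2.congr_right.1 hab)
  have hcherry : ShareVertex s(v, a) s(v, b) := ⟨v, Sym2.mem_mk_left _ _, Sym2.mem_mk_left _ _⟩
  suffices hF : (insert s(v, a) (insert s(v, b) M')).offDiag.filter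
      (fun p => ShareVertex p.1 p.2) = {(s(v, a), s(v, b)), (s(v, b), s(v, a))} by
    rw [hF, card_pair]
    simp [hab]
  ext ⟨p, q⟩
  simp only [mem_filter, mem_offDiag, mem_insert, mem_singleton, Prod.mk.injEq]
  constructor
  · rintro ⟨⟨hp | hp | hp, hq | hq | hq, hpq⟩, hsh⟩ <;> subst_vars
    all_goals first
      | exact absurd hsh (h.not_shareVertex_left hq)
      | exact absurd hsh (h.not_shareVertex_right hq)
      | exact absurd hsh.symm (h.not_shareVertex_left hp)
      | exact absurd hsh.symm (h.not_shareVertex_right hp)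
      | exact absurd hsh (h.pairwise hp hq hpq)
      | simp_all
  · rintro (⟨rfl, rfl⟩ | ⟨rfl, rfl⟩)
    exacts [⟨⟨.inl rfl, .inr (.inl rfl), hab⟩, hcherry⟩,
      ⟨⟨.inr (.inl rfl), .inl rfl, hab.symm⟩, hcherry.symm⟩]

end IsCherryMatching

lemma IsOneNearlyEdgeIndep.exists_isCherryMatching {G : SimpleGraph V} {M : Finset (Sym2 V)}
    (hM : IsOneNearlyEdgeIndep G M) :
    ∃ v a b M', IsCherryMatching G v a b M' ∧ M = insert s(v, a) (insert s(v, b) M') := by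
  obtain ⟨e, he, f, hf, hne, ⟨v, hve, hvf⟩, hunique⟩ := hM.exists_sharing_pair
  obtain ⟨a, rfl⟩ := Sym2.mem_iff_exists.1 hve
  obtain ⟨b, rfl⟩ := Sym2.mem_iff_exists.1 hvf
  set M' := (M.erase s(v, a)).erase s(v, b)
  have hM' : ∀ g ∈ M', g ∈ M ∧ g ≠ s(v, a) ∧ g ≠ s(v, b) := fun g hg => by
    obtain ⟨hgb, hg⟩ := mem_erase.1 hg
    obtain ⟨hga, hgM⟩ := mem_erase.1 hg
    exact ⟨hgM, hga, hgb⟩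
  have hisolated : ∀ g ∈ M', ∀ p ∈ M, p ≠ g → ¬ ShareVertex p g := fun g hg p hp hpg hsh => by
    obtain ⟨hgM, hga, hgb⟩ := hM' g hg
    rcases hunique p hp g hgM hpg hsh with ⟨-, rfl⟩ | ⟨-, rfl⟩
    exacts [hgb rfl, hga rfl]
  refine ⟨v, a, b, M', ⟨G.mem_edgeSet.1 (hM.1 he), G.mem_edgeSet.1 (hM.1 hf), ?_, ?_, ?_, ?_⟩, ?_⟩
  · rintro rfl
    exact hne rfl
  · exact fun g hg => hM.1 (hM' g hg).1
  · exact fun g hg g' hg' hgg' => hisolated g' hg' g (hM' g hg).1 hgg'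
  · intro g hg
    have hna := hisolated g hg _ he (hM' g hg).2.1.symm
    have hnb := hisolated g hg _ hf (hM' g hg).2.2.symm
    exact ⟨fun hv => hna ⟨v, Sym2.mem_mk_left _ _, hv⟩,
      fun ha => hna ⟨a, Sym2.mem_mk_right _ _, ha⟩, fun hb => hnb ⟨b, Sym2.mem_mk_right _ _, hb⟩⟩
  · rw [insert_erase (mem_erase.2 ⟨hne.symm, hf⟩), insert_erase he]

lemma faithfulForest_exists_isOneNearlyEdgeIndep (m : ℕ) :
    ∃ M, IsOneNearlyEdgeIndep (faithfulForest (2 * m + 3)) M ∧ M.card = m + 2 := by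
  let pair : Fin m → Sym2 (Fin (2 * m + 3)) := fun k =>
    s(⟨2 * k + 3, by omega⟩, ⟨2 * k + 4, by omega⟩)
  have hmem : ∀ k i, i ∈ pair k ↔ (i : ℕ) = 2 * k + 3 ∨ (i : ℕ) = 2 * k + 4 := by
    simp [pair, Sym2.mem_iff, Fin.ext_iff]
  have hpair : Function.Injective pair := fun k k' h => by
    have := (hmem k' ⟨2 * k + 3, by omega⟩).1 (h ▸ (hmem k _).2 (.inl rfl))
    dsimp only at this
    ext; omega
  have hcherry : IsCherryMatching (faithfulForest (2 * m + 3)) ⟨1, by omega⟩ ⟨0, by omega⟩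
      ⟨2, by omega⟩ (univ.image pair) := by
    refine ⟨by simp [faithfulForest], by simp [faithfulForest], by simp, ?_, ?_, ?_⟩
    · intro e he
      obtain ⟨k, -, rfl⟩ := mem_image.1 he
      simp only [pair, mem_edgeSet, faithfulForest, ne_eq, Fin.mk.injEq]
      omega
    · intro e he e' he' hne ⟨i, hi, hi'⟩
      obtain ⟨k, -, rfl⟩ := mem_image.1 he
      obtain ⟨k', -, rfl⟩ := mem_image.1 he'
      rw [hmem] at hi hi'
      exact hne (congrArg pair (Fin.ext (by omega)))
    · intro e he
      obtain ⟨k, -, rfl⟩ := mem_image.1 he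
      simp only [hmem]
      omega
  refine ⟨_, hcherry.isOneNearlyEdgeIndep, ?_⟩
  rw [hcherry.card_insert_insert, card_image_of_injective _ hpair, card_univ, Fintype.card_fin]

lemma faithfulForest_eq_map {m n : ℕ} (hm : 2 * m + 3 ≤ n) (hn : n ≤ 2 * m + 4) :
    faithfulForest n = (faithfulForest (2 * m + 3)).map (Fin.castLEEmb hm) := by
  ext i j
  rw [map_adj]
  constructor
  · rintro ⟨hne, h⟩
    have hij := Fin.val_ne_of_ne hne
    exact ⟨⟨i, by omega⟩, ⟨j, by omega⟩, ⟨fun h' => hne (Fin.ext (Fin.mk.inj h')), h⟩, rfl, rfl⟩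
  · rintro ⟨u, w, ⟨hne, h⟩, rfl, rfl⟩
    exact ⟨fun h' => hne ((Fin.castLEEmb hm).injective h'), h⟩

lemma adj_of_faithfulForest_adj {G : SimpleGraph V} {n : ℕ} (f : ℕ → V)
    (h01 : G.Adj (f 0) (f 1)) (h12 : G.Adj (f 1) (f 2))
    (hpair : ∀ k, 2 * k + 4 < n → G.Adj (f (2 * k + 3)) (f (2 * k + 4)))
    {i j : Fin n} (hij : (faithfulForest n).Adj i j) : G.Adj (f i) (f j) := by
  obtain ⟨hne, ⟨hi, hj, h1⟩ | ⟨hi, hj, hk⟩⟩ := hij <;> have hij := Fin.val_ne_of_ne hne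
  · rcases (by omega : (i : ℕ) = 0 ∧ (j : ℕ) = 1 ∨ (i : ℕ) = 1 ∧ (j : ℕ) = 0 ∨
      (i : ℕ) = 1 ∧ (j : ℕ) = 2 ∨ (i : ℕ) = 2 ∧ (j : ℕ) = 1) with
      ⟨hi, hj⟩ | ⟨hi, hj⟩ | ⟨hi, hj⟩ | ⟨hi, hj⟩ <;> rw [hi, hj]
    exacts [h01, h01.symm, h12, h12.symm]
  · have hlt := j.isLt
    obtain ⟨k, (⟨hi, hj⟩ | ⟨hj, hi⟩)⟩ : ∃ k, ((i : ℕ) = 2 * k + 3 ∧ (j : ℕ) = 2 * k + 4) ∨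
        ((j : ℕ) = 2 * k + 3 ∧ (i : ℕ) = 2 * k + 4) := ⟨(min (i : ℕ) j - 3) / 2, by omega⟩ <;>
      rw [hi, hj]
    exacts [hpair k (by omega), (hpair k (by omega)).symm]

lemma Finset.exists_injOn_mapsTo_sym2_mk (s : Finset (Sym2 V)) (d : V) :
    ∃ x y : ℕ → V, Set.InjOn (fun k => s(x k, y k)) (Set.Iio s.card) ∧
      Set.MapsTo (fun k => s(x k, y k)) (Set.Iio s.card) s := by
  let g : ℕ → Sym2 V := fun k =>
    if hk : k < s.card then s.equivFin.symm ⟨k, hk⟩ else s(d, d)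
  have hg : ∀ k, s((g k).out.1, (g k).out.2) = g k := fun k => Quot.out_eq _
  refine ⟨fun k => (g k).out.1, fun k => (g k).out.2, fun k hk k' hk' h => ?_, fun k hk => ?_⟩
  · simp only [hg] at h
    simp only [g, dif_pos (Set.mem_Iio.1 hk), dif_pos (Set.mem_Iio.1 hk')] at h
    exact Fin.mk.inj (s.equivFin.symm.injective (Subtype.ext h))
  · simp only [hg]
    simp only [g, dif_pos (Set.mem_Iio.1 hk)]
    exact coe_mem _

def cherryLabel (a v b : V) (x y : ℕ → V) : ℕ → V
  | 0 => a
  | 1 => v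
  | 2 => b
  | i + 3 => if i % 2 = 0 then x (i / 2) else y (i / 2)

section cherryLabel

variable (a v b : V) (x y : ℕ → V) (k : ℕ)

@[simp] lemma cherryLabel_zero : cherryLabel a v b x y 0 = a := rfl

@[simp] lemma cherryLabel_one : cherryLabel a v b x y 1 = v := rfl

@[simp] lemma cherryLabel_two : cherryLabel a v b x y 2 = b := rfl

@[simp] lemma cherryLabel_two_mul_add_three : cherryLabel a v b x y (2 * k + 3) = x k := by
  simp [cherryLabel]

@[simp] lemma cherryLabel_two_mul_add_four : cherryLabel a v b x y (2 * k + 4) = y k := by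
  show cherryLabel a v b x y ((2 * k + 1) + 3) = y k
  simp only [cherryLabel]
  rw [if_neg (by omega), show (2 * k + 1) / 2 = k by omega]

end cherryLabel

lemma IsCherryMatching.faithfulForest_isContained {G : SimpleGraph V} {v a b : V}
    {M' : Finset (Sym2 V)} (h : IsCherryMatching G v a b M') :
    faithfulForest (2 * M'.card + 3) ⊑ G := by
  obtain ⟨x, y, hinj, hmaps⟩ := M'.exists_injOn_mapsTo_sym2_mk v
  set m := M'.card
  have hedge : ∀ k < m, G.Adj (x k) (y k) := fun k hk => h.subset_edgeSet (hmaps hk)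
  have hout : ∀ k < m, x k ≠ v ∧ x k ≠ a ∧ x k ≠ b ∧ y k ≠ v ∧ y k ≠ a ∧ y k ≠ b := by
    intro k hk
    have := h.notMem _ (hmaps hk)
    simp only [Sym2.mem_iff, not_or] at this
    tauto
  have hdisj : ∀ k < m, ∀ k' < m, k ≠ k' →
      x k ≠ x k' ∧ x k ≠ y k' ∧ y k ≠ x k' ∧ y k ≠ y k' := by
    intro k hk k' hk' hkk'
    have := h.pairwise (hmaps hk) (hmaps hk') (hinj.ne hk hk' hkk')
    exact ⟨fun e => this ⟨x k, by simp, by simp [e]⟩, fun e => this ⟨x k, by simp, by simp [e]⟩,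
      fun e => this ⟨y k, by simp, by simp [e]⟩, fun e => this ⟨y k, by simp, by simp [e]⟩⟩
  have hpos : ∀ i < 2 * m + 3, i = 0 ∨ i = 1 ∨ i = 2 ∨
      ∃ k < m, i = 2 * k + 3 ∨ i = 2 * k + 4 := fun i hi => by
    by_cases hi3 : i < 3
    · omega
    · exact .inr (.inr (.inr ⟨(i - 3) / 2, by omega, by omega⟩))
  have hlabel : Set.InjOn (cherryLabel a v b x y) (Set.Iio (2 * m + 3)) := by
    have hxy : ∀ k < m, x k ≠ y k := fun k hk => (hedge k hk).ne
    have hab := h.ne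
    have hva := h.adj_left.ne
    have hvb := h.adj_right.ne
    intro i hi j hj hij
    -- Labels of different blocks are told apart by `hout` and `hdisj`, those of one block by
    -- `hxy`, `hab`, `hva`, `hvb`.
    rcases hpos i hi with rfl | rfl | rfl | ⟨k, hk, rfl | rfl⟩ <;>
    rcases hpos j hj with rfl | rfl | rfl | ⟨k', hk', rfl | rfl⟩ <;>
    simp only [cherryLabel_zero, cherryLabel_one, cherryLabel_two,
      cherryLabel_two_mul_add_three, cherryLabel_two_mul_add_four] at hij <;>
    grind
  exact ⟨⟨⟨fun i => cherryLabel a v b x y i, adj_of_faithfulForest_adj _ h.adj_left.symm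
    h.adj_right (fun k hk => by simpa using hedge k (by omega))⟩,
    fun i j hij => Fin.ext (hlabel i.isLt j.isLt hij)⟩⟩

lemma IsOneNearlyEdgeIndep.two_mul_card_le [Fintype V] {G : SimpleGraph V}
    {M : Finset (Sym2 V)} (hM : IsOneNearlyEdgeIndep G M) : 2 * M.card ≤ Fintype.card V + 1 := by
  obtain ⟨v, a, b, M', h, rfl⟩ := hM.exists_isCherryMatching
  obtain ⟨f⟩ := h.faithfulForest_isContained
  have := Fintype.card_le_of_injective f f.injective
  rw [Fintype.card_fin] at this
  rw [h.card_insert_insert]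
  omega

theorem exists_isOneNearlyEdgeIndep_card_eq_iff {G : SimpleGraph V} (m : ℕ) :
    (∃ M, IsOneNearlyEdgeIndep G M ∧ M.card = m + 2) ↔ faithfulForest (2 * m + 3) ⊑ G := by
  constructor
  · rintro ⟨M, hM, hcard⟩
    obtain ⟨v, a, b, M', h, rfl⟩ := hM.exists_isCherryMatching
    obtain rfl : M'.card = m := by rw [h.card_insert_insert] at hcard; omega
    exact h.faithfulForest_isContained
  · rintro ⟨f⟩
    obtain ⟨M, hM, hcard⟩ := faithfulForest_exists_isOneNearlyEdgeIndep m
    have hf : Function.Injective f := f.injective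
    refine ⟨_, hM.map f, ?_⟩
    rw [card_image_of_injective _ (Sym2.map.injective hf), hcard]

lemma edgeAlpha1_eq_iff_of_forall_card_le {G : SimpleGraph V} {K : ℕ} (hK : 0 < K)
    (hle : ∀ M, IsOneNearlyEdgeIndep G M → M.card ≤ K) :
    edgeAlpha1 G = K ↔ ∃ M, IsOneNearlyEdgeIndep G M ∧ M.card = K := by
  have hbdd : BddAbove {k | ∃ M, IsOneNearlyEdgeIndep G M ∧ M.card = k} := by
    refine ⟨K, ?_⟩
    rintro _ ⟨M, hM, rfl⟩
    exact hle M hM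
  constructor
  · intro h
    have hne : {k | ∃ M, IsOneNearlyEdgeIndep G M ∧ M.card = k}.Nonempty := by
      by_contra hne
      rw [Set.not_nonempty_iff_eq_empty] at hne
      rw [edgeAlpha1, hne, csSup_empty] at h
      exact hK.ne h
    rw [← h]
    exact Nat.sSup_mem hne hbdd
  · rintro ⟨M, hM, hcard⟩
    refine le_antisymm (csSup_le ⟨_, M, hM, rfl⟩ ?_) (le_csSup hbdd ⟨M, hM, hcard⟩)
    rintro _ ⟨M', hM', rfl⟩
    exact hle M' hM'

lemma isContained_faithfulForest_iff_exists_equiv [Fintype V] {G : SimpleGraph V} {m n : ℕ}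
    (hc : Fintype.card V = n) (hm : 2 * m + 3 ≤ n) (hn : n ≤ 2 * m + 4) :
    faithfulForest (2 * m + 3) ⊑ G ↔
      ∃ e : V ≃ Fin n, ∀ a b : V, (faithfulForest n).Adj (e a) (e b) → G.Adj a b := by
  rw [faithfulForest_eq_map hm hn]
  constructor
  · rintro ⟨f⟩
    let ψ : Fin n → V := fun i =>
      if hi : (i : ℕ) < 2 * m + 3 then f ⟨i, hi⟩ else f ⟨0, by omega⟩
    have hψ : ∀ u, ψ (Fin.castLE hm u) = f u := fun u => by simp [ψ]
    obtain ⟨g, hg⟩ := Set.MapsTo.exists_equiv_extend_of_card_eq (t := univ)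
      (s := Set.range (Fin.castLE hm)) (f := ψ) (by simp [hc])
      (fun _ _ => mem_coe.2 (mem_univ _)) (by
        rintro _ ⟨u, rfl⟩ _ ⟨w, rfl⟩ h
        rw [hψ, hψ] at h
        rw [f.injective h])
    let e : Fin n ≃ V := g.trans (Equiv.subtypeUnivEquiv mem_univ)
    have he : ∀ u, e (Fin.castLE hm u) = f u := fun u => by
      simp [e, hg _ (Set.mem_range_self u), hψ]
    refine ⟨e.symm, fun a b hab => ?_⟩
    obtain ⟨u, w, huw, hu, hw⟩ := (map_adj _ _ _ _).1 hab
    rw [← e.apply_symm_apply a, ← e.apply_symm_apply b, ← hu, ← hw, Fin.coe_castLEEmb, he,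
      he]
    exact f.toHom.map_adj huw
  · rintro ⟨e, he⟩
    refine ⟨⟨⟨fun u => e.symm (Fin.castLE hm u), fun huw => he _ _ ?_⟩,
      e.symm.injective.comp (Fin.castLE_injective hm)⟩⟩
    simp only [Equiv.apply_symm_apply, map_adj]
    exact ⟨_, _, huw, rfl, rfl⟩

end

theorem edgeAlpha1_eq_max_iff_faithful {V : Type*} [Fintype V] (G : SimpleGraph V)
    {n : ℕ} (hn : 3 ≤ n) (hc : Fintype.card V = n) :
    edgeAlpha1 G = (n + 1) / 2 ↔
      ∃ e : V ≃ Fin n, ∀ a b : V,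
        (faithfulForest n).Adj (e a) (e b) → G.Adj a b := by
  obtain ⟨m, hm, hm'⟩ : ∃ m, 2 * m + 3 ≤ n ∧ n ≤ 2 * m + 4 :=
    ⟨(n - 3) / 2, by omega, by omega⟩
  have hcard : (n + 1) / 2 = m + 2 := by omega
  rw [hcard, edgeAlpha1_eq_iff_of_forall_card_le (by omega) fun M hM => by
      have := hM.two_mul_card_le; omega,
    exists_isOneNearlyEdgeIndep_card_eq_iff, isContained_faithfulForest_iff_exists_equiv hc hm hm']
end

section
/- If T is a tree on n ≥ 5 vertices whose maximum degree Δ satisfies 3 ≤ Δ ≤ n − 2, then α'₁(T) ≥ 3. -/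
open scoped Classical

/-!
Let `v` be a vertex of degree at least `3`. Since its degree is at most `n - 2`, some vertex `w ≠ v` is not a
neighbour of `v`, and by connectivity `w` has a neighbour `x`, which is not `v`. As `v` has at
least three neighbours, two of them, `a` and `b`, differ from `x`. Then `va` and `vb` are the only
pair of adjacent edges among `{va, vb, wx}`.
-/

open Finset

section ShareVertex

variable {V : Type*}

lemma shareVertex_comm {e f : Sym2 V} : ShareVertex e f ↔ ShareVertex f e :=
  ⟨fun ⟨v, he, hf⟩ => ⟨v, hf, he⟩, fun ⟨v, hf, he⟩ => ⟨v, he, hf⟩⟩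

lemma shareVertex_mk_mk {a b c d : V} :
    ShareVertex s(a, b) s(c, d) ↔ a = c ∨ a = d ∨ b = c ∨ b = d := by
  simp only [ShareVertex, Sym2.mem_iff]
  aesop

lemma ne_of_not_shareVertex {e f : Sym2 V} (h : ¬ShareVertex e f) : e ≠ f := by
  rintro rfl
  induction e using Sym2.ind with
  | h a b => exact h ⟨a, Sym2.mem_mk_left a b, Sym2.mem_mk_left a b⟩

lemma offDiag_filter_shareVertex_triple {e f g : Sym2 V} (hef : e ≠ f)
    (hsef : ShareVertex e f) (hseg : ¬ShareVertex e g) (hsfg : ¬ShareVertex f g) :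
    (({e, f, g} : Finset (Sym2 V)).offDiag.filter fun p => ShareVertex p.1 p.2) =
      {(e, f), (f, e)} := by
  have hsfe : ShareVertex f e := shareVertex_comm.mp hsef
  have hsge : ¬ShareVertex g e := shareVertex_comm.not.mp hseg
  have hsgf : ¬ShareVertex g f := shareVertex_comm.not.mp hsfg
  ext ⟨p, q⟩
  simp only [mem_filter, mem_offDiag, mem_insert, mem_singleton, Prod.mk.injEq]
  constructor
  · rintro ⟨⟨hp | hp | hp, hq | hq | hq, hpq⟩, hs⟩ <;> subst hp hq <;> tauto
  · rintro (⟨rfl, rfl⟩ | ⟨rfl, rfl⟩) <;> tauto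

end ShareVertex

namespace SimpleGraph

variable {V : Type*} (G : SimpleGraph V)

lemma isOneNearlyEdgeIndep_triple {e f g : Sym2 V}
    (he : e ∈ G.edgeSet) (hf : f ∈ G.edgeSet) (hg : g ∈ G.edgeSet) (hef : e ≠ f)
    (hsef : ShareVertex e f) (hseg : ¬ShareVertex e g) (hsfg : ¬ShareVertex f g) :
    IsOneNearlyEdgeIndep G {e, f, g} := by
  refine ⟨?_, ?_⟩
  · simp only [coe_insert, coe_singleton, Set.insert_subset_iff, Set.singleton_subset_iff]
    exact ⟨he, hf, hg⟩
  · rw [offDiag_filter_shareVertex_triple hef hsef hseg hsfg,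
      card_pair (by simp [Prod.ext_iff, hef])]

lemma card_le_edgeAlpha1 [Finite V] {M : Finset (Sym2 V)} (hM : IsOneNearlyEdgeIndep G M) :
    #M ≤ edgeAlpha1 G := by
  refine le_csSup ⟨G.edgeSet.ncard, ?_⟩ ⟨M, hM, rfl⟩
  rintro k ⟨N, hN, rfl⟩
  rw [← Set.ncard_coe_finset]
  exact Set.ncard_le_ncard hN.1

lemma three_le_edgeAlpha1_of_shareVertex [Finite V] {e f g : Sym2 V}
    (he : e ∈ G.edgeSet) (hf : f ∈ G.edgeSet) (hg : g ∈ G.edgeSet) (hef : e ≠ f)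
    (hsef : ShareVertex e f) (hseg : ¬ShareVertex e g) (hsfg : ¬ShareVertex f g) :
    3 ≤ edgeAlpha1 G := by
  have hcard : #({e, f, g} : Finset (Sym2 V)) = 3 := card_eq_three.mpr
    ⟨e, f, g, hef, ne_of_not_shareVertex hseg, ne_of_not_shareVertex hsfg, rfl⟩
  exact hcard ▸ G.card_le_edgeAlpha1 (G.isOneNearlyEdgeIndep_triple he hf hg hef hsef hseg hsfg)

lemma three_le_edgeAlpha1_of_adj [Finite V] {v a b w x : V}
    (hva : G.Adj v a) (hvb : G.Adj v b) (hwx : G.Adj w x) (hab : a ≠ b) (hax : a ≠ x)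
    (hbx : b ≠ x) (hvw : v ≠ w) (hnvw : ¬G.Adj v w) :
    3 ≤ edgeAlpha1 G := by
  have hvx : v ≠ x := by rintro rfl; exact hnvw hwx.symm
  have haw : a ≠ w := by rintro rfl; exact hnvw hva
  have hbw : b ≠ w := by rintro rfl; exact hnvw hvb
  refine G.three_le_edgeAlpha1_of_shareVertex
    (G.mem_edgeSet.mpr hva) (G.mem_edgeSet.mpr hvb) (G.mem_edgeSet.mpr hwx) ?_ ?_ ?_ ?_
  · simp [hab, hvb.ne]
  all_goals simp [shareVertex_mk_mk, hvw, hvx, haw, hax, hbw, hbx]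

variable [Fintype V]

lemma exists_ne_not_adj_of_degree_add_one_lt {v : V} (h : G.degree v + 1 < Fintype.card V) :
    ∃ w, w ≠ v ∧ ¬G.Adj v w := by
  by_contra! hall
  have hsub : (univ : Finset V) ⊆ insert v (G.neighborFinset v) := fun w _ => by
    rcases eq_or_ne w v with rfl | hw
    · exact mem_insert_self w _
    · exact mem_insert_of_mem ((G.mem_neighborFinset v w).mpr (hall w hw))
  have := (card_le_card hsub).trans (card_insert_le v (G.neighborFinset v))
  rw [card_univ, card_neighborFinset_eq_degree] at this
  omega

lemma exists_adj_adj_ne_of_three_le_degree {v : V} (h : 3 ≤ G.degree v) (x : V) :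
    ∃ a b, G.Adj v a ∧ G.Adj v b ∧ a ≠ b ∧ a ≠ x ∧ b ≠ x := by
  have hcard : 1 < #((G.neighborFinset v).erase x) := by
    have := pred_card_le_card_erase (s := G.neighborFinset v) (a := x)
    rw [card_neighborFinset_eq_degree] at this
    omega
  obtain ⟨a, ha, b, hb, hab⟩ := one_lt_card.mp hcard
  rw [mem_erase, mem_neighborFinset] at ha hb
  exact ⟨a, b, ha.2, hb.2, hab, ha.1, hb.1⟩

end SimpleGraph

theorem edgeAlpha1_ge_three_of_tree_middle_maxDegree_general {V : Type*} [Fintype V]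
    (G : SimpleGraph V) (htree : G.IsTree) {n : ℕ} (hc : Fintype.card V = n)
    (hΔlow : ∃ v : V, 3 ≤ G.degree v)
    (hΔhigh : ∀ v : V, G.degree v ≤ n - 2) :
    3 ≤ edgeAlpha1 G := by
  obtain ⟨v, hv⟩ := hΔlow
  have hfar : G.degree v + 1 < Fintype.card V := by
    have := hΔhigh v
    omega
  obtain ⟨w, hwv, hnvw⟩ := G.exists_ne_not_adj_of_degree_add_one_lt hfar
  obtain ⟨x, hwx⟩ := (htree.connected w v).nonempty_neighborSet_left hwv
  obtain ⟨a, b, hva, hvb, hab, hax, hbx⟩ := G.exists_adj_adj_ne_of_three_le_degree hv x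
  exact G.three_le_edgeAlpha1_of_adj hva hvb hwx hab hax hbx hwv.symm hnvw

theorem edgeAlpha1_ge_three_of_tree_middle_maxDegree {V : Type*} [Fintype V]
    (G : SimpleGraph V) (htree : G.IsTree) {n : ℕ} (hc : Fintype.card V = n)
    (hn : 5 ≤ n) (hΔlow : ∃ v : V, 3 ≤ G.degree v)
    (hΔhigh : ∀ v : V, G.degree v ≤ n - 2) :
    3 ≤ edgeAlpha1 G :=
  edgeAlpha1_ge_three_of_tree_middle_maxDegree_general G htree hc hΔlow hΔhigh
end
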